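/- arXiv:2001.06838 — 6 statements merged into one kernel-verified Lean document; each statement's English description precedes it below -/
import Mathlib

section
/- Let (ξ_t)_{t≥1} be a sequence of independent real-valued random variables that are uniformly bounded (there exists C > 0 with |ξ_t| ≤ C almost surely for every t), and suppose ξ_t converges in distribution to a random variable ξ, i.e. for every ε ∈ ℝ, lim_{t→∞} P(ξ_t ≤ ε) = P(ξ ≤ ε). Fix α ∈ (0,1). Then the expectation of the exponential moving average statistic converges to the expectation of the limit: lim_{t→∞} E[E_t] = E[ξ]. -/
/-!
Since expectation is linear, `E[E_t]` is the exponential moving average of the means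
`m_t = E[ξ_t]`. Read backwards from `t`, this average puts the summable weights `(1 - α) α^j` on
the terms `m_{t-j}`, so by Tannery's theorem it converges to `lim m_t` whenever that limit exists.

It exists and equals `E[ξ]`: the bound `|ξ_t| ≤ C` passes to `ξ` through the distribution
functions at `C` and below `-C`, and for a variable `X` with `|X| ≤ C` the layer cake formula
gives `E[X] + C = ∫_0^{2C} (1 - P(X ≤ s - C)) ds`. The integrands for `ξ_t` converge pointwise
to the one for `ξ` and are bounded by `1`, so dominated convergence applies.
-/

open MeasureTheory ProbabilityTheory Filter Topology

theorem tendsto_sum_range_mul_sub {w a : ℕ → ℝ} {L : ℝ} (hw : Summable w)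
    (ha : Tendsto a atTop (𝓝 L)) :
    Tendsto (fun t => ∑ j ∈ Finset.range t, w j * a (t - j)) atTop (𝓝 ((∑' j, w j) * L)) := by
  obtain ⟨M, hM⟩ := isBounded_iff_forall_norm_le.1 (Metric.isBounded_range_of_tendsto a ha)
  let f : ℕ → ℕ → ℝ := fun t j => if j < t then w j * a (t - j) else 0
  have hf : ∀ t, ∑' j, f t j = ∑ j ∈ Finset.range t, w j * a (t - j) := fun t => by
    rw [tsum_eq_sum (s := Finset.range t) fun j hj => if_neg (by simpa using hj)]
    exact Finset.sum_congr rfl fun j hj => if_pos (Finset.mem_range.1 hj)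
  rw [← tsum_mul_right]
  refine (tendsto_tsum_of_dominated_convergence (bound := fun j => |w j| * M)
    (hw.abs.mul_right M) (fun j => ?_) (.of_forall fun t j => ?_)).congr hf
  · refine ((ha.comp (tendsto_sub_atTop_nat j)).const_mul (w j)).congr' ?_
    filter_upwards [eventually_gt_atTop j] with t ht
    exact (if_pos ht).symm
  · simp only [f]
    split_ifs
    · rw [norm_mul, Real.norm_eq_abs]
      exact mul_le_mul_of_nonneg_left (hM _ ⟨_, rfl⟩) (abs_nonneg _)
    · simpa using mul_nonneg (abs_nonneg (w j)) ((norm_nonneg _).trans (hM _ ⟨0, rfl⟩))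

noncomputable def expMovingAverage (α : ℝ) (a : ℕ → ℝ) (t : ℕ) : ℝ :=
  (1 - α) * ∑ i ∈ Finset.Icc 1 t, α ^ (t - i) * a i

theorem expMovingAverage_eq_sum_range (α : ℝ) (a : ℕ → ℝ) (t : ℕ) :
    expMovingAverage α a t = (1 - α) * ∑ j ∈ Finset.range t, α ^ j * a (t - j) := by
  refine congrArg _ (Finset.sum_nbij' (fun i => t - i) (fun j => t - j) ?_ ?_ ?_ ?_ ?_)
  all_goals intro i hi
  all_goals simp only [Finset.mem_Icc, Finset.mem_range] at hi ⊢
  iterate 4 omega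
  rw [Nat.sub_sub_self hi.2]

theorem Filter.Tendsto.expMovingAverage {a : ℕ → ℝ} {L : ℝ} (ha : Tendsto a atTop (𝓝 L))
    {α : ℝ} (hα₀ : 0 ≤ α) (hα₁ : α < 1) :
    Tendsto (expMovingAverage α a) atTop (𝓝 L) := by
  have h := (tendsto_sum_range_mul_sub (summable_geometric_of_lt_one hα₀ hα₁) ha).const_mul
    (1 - α)
  rwa [tsum_geometric_of_lt_one hα₀ hα₁, ← mul_assoc, mul_inv_cancel₀ (by linarith), one_mul,
    ← funext (expMovingAverage_eq_sum_range α a)] at h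

section

variable {Ω : Type*} [MeasurableSpace Ω] {μ : Measure Ω}

theorem integral_expMovingAverage {X : ℕ → Ω → ℝ} (hX : ∀ i, Integrable (X i) μ) (α : ℝ)
    (t : ℕ) :
    ∫ ω, expMovingAverage α (fun i => X i ω) t ∂μ
      = expMovingAverage α (fun i => ∫ ω, X i ω ∂μ) t := by
  simp only [expMovingAverage]
  rw [integral_const_mul, integral_finsetSum _ fun i _ => (hX i).const_mul _]
  simp_rw [integral_const_mul]

theorem ae_lt_iff_measureReal_le_eq_zero [IsFiniteMeasure μ] {X : Ω → ℝ} (x : ℝ) :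
    (∀ᵐ ω ∂μ, x < X ω) ↔ μ.real {ω | X ω ≤ x} = 0 := by
  simp [ae_iff, measureReal_eq_zero_iff]

variable [IsProbabilityMeasure μ]

theorem ae_le_iff_measureReal_le_eq_one {X : Ω → ℝ} (hX : Measurable X) (x : ℝ) :
    (∀ᵐ ω ∂μ, X ω ≤ x) ↔ μ.real {ω | X ω ≤ x} = 1 := by
  rw [measureReal_def, ENNReal.toReal_eq_one_iff]
  exact mem_ae_iff_prob_eq_one (hX measurableSet_Iic)

theorem ae_abs_le_of_tendsto_measureReal_le {X : ℕ → Ω → ℝ} {Y : Ω → ℝ}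
    (hX : ∀ t, Measurable (X t)) (hY : Measurable Y) {C : ℝ} (hXC : ∀ t, ∀ᵐ ω ∂μ, |X t ω| ≤ C)
    (hconv : ∀ x, Tendsto (fun t => μ.real {ω | X t ω ≤ x}) atTop (𝓝 (μ.real {ω | Y ω ≤ x}))) :
    ∀ᵐ ω ∂μ, |Y ω| ≤ C := by
  have hle : ∀ᵐ ω ∂μ, Y ω ≤ C := by
    refine (ae_le_iff_measureReal_le_eq_one hY C).2 (tendsto_const_nhds_iff.1 ((hconv C).congr
      fun t => ?_)).symm
    exact (ae_le_iff_measureReal_le_eq_one (hX t) C).1 ((hXC t).mono fun ω h => (abs_le.1 h).2)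
  have hgt : ∀ n : ℕ, ∀ᵐ ω ∂μ, -C - 1 / (n + 1) < Y ω := fun n => by
    refine (ae_lt_iff_measureReal_le_eq_zero _).2 (tendsto_const_nhds_iff.1 ((hconv _).congr
      fun t => ?_)).symm
    refine (ae_lt_iff_measureReal_le_eq_zero _).1 ((hXC t).mono fun ω h => ?_)
    linarith [(abs_le.1 h).1, Nat.one_div_pos_of_nat (α := ℝ) (n := n)]
  filter_upwards [hle, ae_all_iff.2 hgt] with ω hle hgt
  refine abs_le.2 ⟨le_of_tendsto' (x := atTop) ?_ fun n => (hgt n).le, hle⟩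
  simpa using tendsto_one_div_add_atTop_nhds_zero_nat.const_sub (-C)

theorem integral_add_eq_integral_Ioc_one_sub_measureReal_le {X : Ω → ℝ} (hX : Measurable X)
    {C : ℝ} (hXC : ∀ᵐ ω ∂μ, |X ω| ≤ C) :
    ∫ ω, X ω ∂μ + C = ∫ s in Set.Ioc 0 (2 * C), (1 - μ.real {ω | X ω ≤ s - C}) := by
  have hint : Integrable X μ := .of_bound hX.aestronglyMeasurable C hXC
  have hnonneg : 0 ≤ᵐ[μ] fun ω => X ω + C :=
    hXC.mono fun ω h => by simp only [Pi.zero_apply]; linarith [(abs_le.1 h).1]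
  have hbdd : (fun ω => X ω + C) ≤ᵐ[μ] fun _ => 2 * C :=
    hXC.mono fun ω h => by linarith [(abs_le.1 h).2]
  have hshift : ∫ ω, (X ω + C) ∂μ = ∫ ω, X ω ∂μ + C := by
    simp [integral_add hint (integrable_const C)]
  have hint' : Integrable (fun ω => X ω + C) μ := hint.add (integrable_const C)
  rw [← hshift, hint'.integral_eq_integral_Ioc_meas_le hnonneg hbdd]
  refine integral_congr_ae ?_
  -- `{s ≤ X + C}` and `{s < X + C}` have the same measure for all but countably many `s`
  filter_upwards [meas_le_ae_eq_meas_lt μ (volume.restrict (Set.Ioc 0 (2 * C)))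
    fun ω => X ω + C] with s hs
  have hcompl : {ω | s < X ω + C} = {ω | X ω ≤ s - C}ᶜ := by
    ext ω
    simp [sub_lt_iff_lt_add]
  rw [measureReal_def, hs, hcompl, ← measureReal_def]
  exact probReal_compl_eq_one_sub (hX measurableSet_Iic)

theorem tendsto_integral_of_tendsto_measureReal_le {X : ℕ → Ω → ℝ} {Y : Ω → ℝ}
    (hX : ∀ t, Measurable (X t)) (hY : Measurable Y) {C : ℝ}
    (hXC : ∀ t, ∀ᵐ ω ∂μ, |X t ω| ≤ C) (hYC : ∀ᵐ ω ∂μ, |Y ω| ≤ C)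
    (hconv : ∀ x, Tendsto (fun t => μ.real {ω | X t ω ≤ x}) atTop (𝓝 (μ.real {ω | Y ω ≤ x}))) :
    Tendsto (fun t => ∫ ω, X t ω ∂μ) atTop (𝓝 (∫ ω, Y ω ∂μ)) := by
  suffices Tendsto (fun t => ∫ ω, X t ω ∂μ + C) atTop (𝓝 (∫ ω, Y ω ∂μ + C)) by
    simpa using this.sub_const C
  have hmono : ∀ Z : Ω → ℝ, Monotone fun s => μ.real {ω | Z ω ≤ s - C} := fun Z s s' hss' =>
    measureReal_mono fun ω (h : Z ω ≤ s - C) => show Z ω ≤ s' - C by linarith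
  rw [integral_add_eq_integral_Ioc_one_sub_measureReal_le hY hYC]
  refine (tendsto_integral_of_dominated_convergence (fun _ => 1)
    (fun t => ((hmono (X t)).measurable.const_sub 1).aestronglyMeasurable)
    (integrableOn_const measure_Ioc_lt_top.ne) (fun t => .of_forall fun s => ?_)
    (.of_forall fun s => tendsto_const_nhds.sub (hconv _))).congr
    fun t => (integral_add_eq_integral_Ioc_one_sub_measureReal_le (hX t) (hXC t)).symm
  rw [Real.norm_eq_abs, abs_le]
  constructor <;> linarith [measureReal_nonneg (μ := μ) (s := {ω | X t ω ≤ s - C}),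
    measureReal_le_one (μ := μ) (s := {ω | X t ω ≤ s - C})]

end

theorem ema_expectation_tendsto_general
    {Ω : Type*} [MeasurableSpace Ω] (μ : Measure Ω) [IsProbabilityMeasure μ]
    (ξ : ℕ → Ω → ℝ) (ξlim : Ω → ℝ)
    (hmeas : ∀ t, Measurable (ξ t)) (hmeaslim : Measurable ξlim)
    (C : ℝ)
    (hbdd : ∀ t, ∀ᵐ ω ∂μ, |ξ t ω| ≤ C)
    (hconv : ∀ ε : ℝ, Tendsto (fun t => (μ {ω | ξ t ω ≤ ε}).toReal) atTop
      (nhds ((μ {ω | ξlim ω ≤ ε}).toReal)))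
    (α : ℝ) (hα : α ∈ Set.Ioo (0 : ℝ) 1) :
    Tendsto (fun t => μ[fun ω => (1 - α) * ∑ i ∈ Finset.Icc 1 t, α ^ (t - i) * ξ i ω])
      atTop (nhds (μ[ξlim])) := by
  obtain ⟨hα₀, hα₁⟩ := hα
  have hlimbdd := ae_abs_le_of_tendsto_measureReal_le hmeas hmeaslim hbdd hconv
  have hmean := tendsto_integral_of_tendsto_measureReal_le hmeas hmeaslim hbdd hlimbdd hconv
  have hint : ∀ t, Integrable (ξ t) μ := fun t =>
    .of_bound (hmeas t).aestronglyMeasurable C (hbdd t)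
  exact (hmean.expMovingAverage hα₀.le hα₁).congr fun t =>
    (integral_expMovingAverage hint α t).symm

/-- For independent, uniformly bounded real random variables `ξ t` converging in
distribution to `ξlim` (pointwise convergence of CDFs), and `α ∈ (0,1)`, the expectation of the
exponential moving average statistic `E_t = (1-α) ∑_{i=1}^t α^(t-i) ξ_i` converges to `E[ξlim]`. -/
theorem ema_expectation_tendsto
    {Ω : Type*} [MeasurableSpace Ω] (μ : Measure Ω) [IsProbabilityMeasure μ]
    (ξ : ℕ → Ω → ℝ) (ξlim : Ω → ℝ)
    (hmeas : ∀ t, Measurable (ξ t)) (hmeaslim : Measurable ξlim)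
    (C : ℝ) (hC : 0 < C)
    (hbdd : ∀ t, ∀ᵐ ω ∂μ, |ξ t ω| ≤ C)
    (hindep : iIndepFun ξ μ)
    (hconv : ∀ ε : ℝ, Tendsto (fun t => (μ {ω | ξ t ω ≤ ε}).toReal) atTop
      (nhds ((μ {ω | ξlim ω ≤ ε}).toReal)))
    (α : ℝ) (hα : α ∈ Set.Ioo (0 : ℝ) 1) :
    Tendsto (fun t => μ[fun ω => (1 - α) * ∑ i ∈ Finset.Icc 1 t, α ^ (t - i) * ξ i ω])
      atTop (nhds (μ[ξlim])) :=
  ema_expectation_tendsto_general μ ξ ξlim hmeas hmeaslim C hbdd hconv α hα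
end

section
/- Let (ξ_t)_{t≥1} be a sequence of independent real-valued random variables that are uniformly bounded (there exists C > 0 with |ξ_t| ≤ C almost surely for every t), and suppose the distributions of consecutive terms become uniformly close: lim_{t→∞} sup_{λ ∈ ℝ} |P(ξ_{t−1} ≤ λ) − P(ξ_t ≤ λ)| = 0. Fix a window size m ≥ 1. Then the variance of the simple moving average statistic satisfies lim_{t→∞} (Var(S_t) − Var(ξ_t)/m) = 0. -/
/-!
A `[-C, C]`-valued variable, shifted into `[0, 2C]`, has `E X = ∫₀^{2C} P(X > t) dt` and likewise
for `X²` (layer cake), so its variance is Lipschitz in the sup distance of distribution functions: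
`|Var X - Var Y| ≤ 12 C² sup_λ |F_X(λ) - F_Y(λ)|`. Hence `Var ξ_{t-1} - Var ξ_t → 0`, and by
telescoping `Var ξ_{t-k} - Var ξ_t → 0` for each fixed `k`. By independence
`Var S_t - Var ξ_t / m = m⁻² ∑_{k<m} (Var ξ_{t-k} - Var ξ_t)`, a fixed number of vanishing terms.
-/

open MeasureTheory ProbabilityTheory Filter Topology Finset

lemma integrableOn_measureReal_lt {Ω : Type*} [MeasurableSpace Ω] {μ : Measure Ω}
    [IsFiniteMeasure μ] (X : Ω → ℝ) (a b : ℝ) :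
    IntegrableOn (fun t => μ.real {ω | t < X ω}) (Set.Ioc a b) := by
  have hanti : Antitone fun t => μ.real {ω | t < X ω} := fun s t hst =>
    measureReal_mono fun ω hω => hst.trans_lt hω
  exact (hanti.locallyIntegrable.integrableOn_isCompact isCompact_Icc).mono_set
    Set.Ioc_subset_Icc_self

section CDF

variable {Ω : Type*} [MeasurableSpace Ω] {μ : Measure Ω} [IsProbabilityMeasure μ]

lemma measureReal_lt_eq_one_sub_measureReal_le {X : Ω → ℝ} (hX : AEMeasurable X μ) (t : ℝ) :
    μ.real {ω | t < X ω} = 1 - μ.real {ω | X ω ≤ t} := by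
  rw [← probReal_compl_eq_one_sub₀ (nullMeasurableSet_le hX aemeasurable_const)]
  simp only [Set.compl_ofPred, not_le]

lemma integral_eq_integral_Ioc_measureReal_lt {X : Ω → ℝ} {B : ℝ} (hX : AEMeasurable X μ)
    (hXB : ∀ᵐ ω ∂μ, X ω ∈ Set.Icc 0 B) :
    ∫ ω, X ω ∂μ = ∫ t in Set.Ioc 0 B, μ.real {ω | t < X ω} := by
  have hint : Integrable X μ := (memLp_of_bounded hXB hX.aestronglyMeasurable 1).integrable le_rfl
  rw [hint.integral_eq_integral_meas_lt (hXB.mono fun _ h => h.1)]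
  refine setIntegral_eq_of_subset_of_forall_sdiff_eq_zero measurableSet_Ioi
    Set.Ioc_subset_Ioi_self fun t ht => ?_
  have hBt : B < t := lt_of_not_ge fun h => ht.2 ⟨ht.1, h⟩
  rw [measureReal_eq_zero_iff, measure_eq_zero_iff_ae_notMem]
  filter_upwards [hXB] with ω hω using not_lt.2 (hω.2.trans hBt.le)

lemma abs_integral_sub_le_of_abs_cdf_sub_le {X Y : Ω → ℝ} {B d : ℝ}
    (hX : AEMeasurable X μ) (hY : AEMeasurable Y μ)
    (hXB : ∀ᵐ ω ∂μ, X ω ∈ Set.Icc 0 B) (hYB : ∀ᵐ ω ∂μ, Y ω ∈ Set.Icc 0 B)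
    (hd : ∀ t ∈ Set.Ioc 0 B, |μ.real {ω | X ω ≤ t} - μ.real {ω | Y ω ≤ t}| ≤ d) :
    |∫ ω, X ω ∂μ - ∫ ω, Y ω ∂μ| ≤ B * d := by
  have hB : 0 ≤ B := hXB.exists.elim fun _ h => h.1.trans h.2
  have htail : ∀ t ∈ Set.Ioc 0 B, |μ.real {ω | t < X ω} - μ.real {ω | t < Y ω}| ≤ d :=
    fun t ht => by
      rw [measureReal_lt_eq_one_sub_measureReal_le hX,
        measureReal_lt_eq_one_sub_measureReal_le hY, sub_sub_sub_cancel_left, abs_sub_comm]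
      exact hd t ht
  rw [integral_eq_integral_Ioc_measureReal_lt hX hXB,
    integral_eq_integral_Ioc_measureReal_lt hY hYB,
    ← integral_sub (integrableOn_measureReal_lt X 0 B) (integrableOn_measureReal_lt Y 0 B),
    ← Real.norm_eq_abs]
  calc _ ≤ d * volume.real (Set.Ioc 0 B) :=
        norm_setIntegral_le_of_norm_le_const measure_Ioc_lt_top htail
    _ = B * d := by rw [Real.volume_real_Ioc_of_le hB, sub_zero, mul_comm]

lemma abs_variance_sub_le_of_ae_mem_Icc {X Y : Ω → ℝ} {B d : ℝ}
    (hX : AEMeasurable X μ) (hY : AEMeasurable Y μ)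
    (hXB : ∀ᵐ ω ∂μ, X ω ∈ Set.Icc 0 B) (hYB : ∀ᵐ ω ∂μ, Y ω ∈ Set.Icc 0 B)
    (hd : ∀ t ∈ Set.Ioc 0 B, |μ.real {ω | X ω ≤ t} - μ.real {ω | Y ω ≤ t}| ≤ d) :
    |Var[X; μ] - Var[Y; μ]| ≤ 3 * B ^ 2 * d := by
  have hsq : ∀ {Z : Ω → ℝ}, (∀ᵐ ω ∂μ, Z ω ∈ Set.Icc 0 B) →
      ∀ᵐ ω ∂μ, Z ω ^ 2 ∈ Set.Icc 0 (B ^ 2) :=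
    fun hZB => hZB.mono fun _ h => ⟨sq_nonneg _, pow_le_pow_left₀ h.1 h.2 2⟩
  have hcdf_sq : ∀ {Z : Ω → ℝ}, (∀ᵐ ω ∂μ, Z ω ∈ Set.Icc 0 B) → ∀ t, 0 ≤ t →
      μ.real {ω | Z ω ^ 2 ≤ t} = μ.real {ω | Z ω ≤ √t} := fun hZB t ht =>
    measureReal_congr <| hZB.mono fun _ h => propext (Real.le_sqrt h.1 ht).symm
  have hmean : ∀ {Z : Ω → ℝ}, AEMeasurable Z μ → (∀ᵐ ω ∂μ, Z ω ∈ Set.Icc 0 B) →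
      ∫ ω, Z ω ∂μ ∈ Set.Icc 0 B := fun hZ hZB =>
    (convex_Icc 0 B).integral_mem isClosed_Icc hZB
      ((memLp_of_bounded hZB hZ.aestronglyMeasurable 1).integrable le_rfl)
  have hB : 0 ≤ B := hXB.exists.elim fun _ h => h.1.trans h.2
  have hd_sq : ∀ t ∈ Set.Ioc 0 (B ^ 2),
      |μ.real {ω | X ω ^ 2 ≤ t} - μ.real {ω | Y ω ^ 2 ≤ t}| ≤ d := fun t ht => by
    rw [hcdf_sq hXB t ht.1.le, hcdf_sq hYB t ht.1.le]
    exact hd √t ⟨Real.sqrt_pos.2 ht.1, Real.sqrt_le_left hB |>.2 ht.2⟩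
  have h1 := abs_integral_sub_le_of_abs_cdf_sub_le hX hY hXB hYB hd
  have h2 := abs_integral_sub_le_of_abs_cdf_sub_le (hX.pow_const 2) (hY.pow_const 2) (hsq hXB)
    (hsq hYB) hd_sq
  obtain ⟨hEX0, hEXB⟩ := hmean hX hXB
  obtain ⟨hEY0, hEYB⟩ := hmean hY hYB
  rw [variance_eq_sub (memLp_of_bounded hXB hX.aestronglyMeasurable 2),
    variance_eq_sub (memLp_of_bounded hYB hY.aestronglyMeasurable 2)]
  simp only [Pi.pow_apply]
  set EX := ∫ ω, X ω ∂μ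
  set EY := ∫ ω, Y ω ∂μ
  have hsum : |EX + EY| ≤ 2 * B := abs_le.2 ⟨by linarith, by linarith⟩
  have hprod : |EX - EY| * |EX + EY| ≤ B * d * (2 * B) :=
    mul_le_mul h1 hsum (abs_nonneg _) ((abs_nonneg _).trans h1)
  calc _ = |(∫ ω, X ω ^ 2 ∂μ - ∫ ω, Y ω ^ 2 ∂μ) - (EX - EY) * (EX + EY)| := by ring_nf
    _ ≤ B ^ 2 * d + B * d * (2 * B) := by
      grw [abs_sub, abs_mul, h2, hprod]
    _ = 3 * B ^ 2 * d := by ring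

lemma abs_variance_sub_le_of_abs_cdf_sub_le {f g : Ω → ℝ} {C d : ℝ}
    (hf : AEMeasurable f μ) (hg : AEMeasurable g μ)
    (hfC : ∀ᵐ ω ∂μ, |f ω| ≤ C) (hgC : ∀ᵐ ω ∂μ, |g ω| ≤ C)
    (hd : ∀ a, |μ.real {ω | f ω ≤ a} - μ.real {ω | g ω ≤ a}| ≤ d) :
    |Var[f; μ] - Var[g; μ]| ≤ 12 * C ^ 2 * d := by
  have hshift : ∀ {Z : Ω → ℝ}, (∀ᵐ ω ∂μ, |Z ω| ≤ C) →
      ∀ᵐ ω ∂μ, Z ω + C ∈ Set.Icc 0 (2 * C) :=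
    fun hZC => hZC.mono fun _ h => by constructor <;> linarith [abs_le.1 h]
  have hcdf_shift : ∀ (Z : Ω → ℝ) t, μ.real {ω | Z ω + C ≤ t} = μ.real {ω | Z ω ≤ t - C} :=
    fun Z t => by simp only [← le_sub_iff_add_le]
  rw [← variance_add_const hf.aestronglyMeasurable C,
    ← variance_add_const hg.aestronglyMeasurable C]
  convert abs_variance_sub_le_of_ae_mem_Icc (hf.add_const C) (hg.add_const C) (hshift hfC)
    (hshift hgC) fun t _ => by rw [hcdf_shift, hcdf_shift]; exact hd _ using 1
  ring

lemma bddAbove_range_abs_measureReal_sub {ι : Type*} (s u : ι → Set Ω) :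
    BddAbove (Set.range fun i => |μ.real (s i) - μ.real (u i)|) :=
  ⟨1, Set.forall_mem_range.2 fun _ => abs_sub_le_of_nonneg_of_le measureReal_nonneg
    measureReal_le_one measureReal_nonneg measureReal_le_one⟩

end CDF

lemma tendsto_sub_sub_of_tendsto_pred_sub {G : Type*} [AddCommGroup G] [TopologicalSpace G]
    [IsTopologicalAddGroup G] {v : ℕ → G} (h : Tendsto (fun s => v (s - 1) - v s) atTop (𝓝 0))
    (k : ℕ) : Tendsto (fun t => v (t - k) - v t) atTop (𝓝 0) := by
  induction k with
  | zero => simpa using tendsto_const_nhds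
  | succ k ih =>
    have hstep := h.comp (tendsto_sub_atTop_nat k)
    simpa [Function.comp_def, Nat.sub_sub] using hstep.add ih

lemma sum_Icc_sub_add_one_eq_sum_range {M : Type*} [AddCommMonoid M] (f : ℕ → M) {m t : ℕ}
    (h : m ≤ t) : ∑ i ∈ Icc (t - m + 1) t, f i = ∑ k ∈ range m, f (t - k) := by
  rw [range_eq_Ico, sum_Ico_reflect f 0 (by omega), Nat.sub_zero, Ico_add_one_right_eq_Icc,
    Nat.sub_add_comm h]

lemma variance_sum_div_of_iIndepFun {Ω ι : Type*} [MeasurableSpace Ω] {μ : Measure Ω}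
    {ξ : ι → Ω → ℝ} (hξ : ∀ i, MemLp (ξ i) 2 μ) (hind : iIndepFun ξ μ) (s : Finset ι) (c : ℝ) :
    Var[fun ω => (∑ i ∈ s, ξ i ω) / c; μ] = (∑ i ∈ s, Var[ξ i; μ]) / c ^ 2 := by
  have : (fun ω => (∑ i ∈ s, ξ i ω) / c) = c⁻¹ • ∑ i ∈ s, ξ i := by
    ext ω; simp [Finset.sum_apply, div_eq_inv_mul]
  rw [this, variance_smul, IndepFun.variance_sum (fun i _ => hξ i)
    fun i _ j _ hij => hind.indepFun hij, inv_pow, inv_mul_eq_div]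

theorem sma_variance_tracks_general
    {Ω : Type*} [MeasurableSpace Ω] (μ : Measure Ω) [IsProbabilityMeasure μ]
    (ξ : ℕ → Ω → ℝ)
    (hmeas : ∀ t, Measurable (ξ t))
    (C : ℝ)
    (hbdd : ∀ t, ∀ᵐ ω ∂μ, |ξ t ω| ≤ C)
    (hindep : iIndepFun ξ μ)
    (hclose : Tendsto
      (fun t => ⨆ lam : ℝ, |(μ {ω | ξ (t - 1) ω ≤ lam}).toReal - (μ {ω | ξ t ω ≤ lam}).toReal|)
      atTop (nhds 0))
    (m : ℕ) :
    Tendsto (fun t =>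
        variance (fun ω => (∑ i ∈ Finset.Icc (t - m + 1) t, ξ i ω) / m) μ
          - variance (ξ t) μ / m)
      atTop (nhds 0) := by
  have hcdf (t : ℕ) (lam : ℝ) :
      |(μ {ω | ξ (t - 1) ω ≤ lam}).toReal - (μ {ω | ξ t ω ≤ lam}).toReal| ≤
        ⨆ lam : ℝ, |(μ {ω | ξ (t - 1) ω ≤ lam}).toReal - (μ {ω | ξ t ω ≤ lam}).toReal| :=
    le_ciSup (bddAbove_range_abs_measureReal_sub (fun lam => {ω | ξ (t - 1) ω ≤ lam})
      fun lam => {ω | ξ t ω ≤ lam}) lam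
  have hstep : Tendsto (fun t => Var[ξ (t - 1); μ] - Var[ξ t; μ]) atTop (𝓝 0) :=
    squeeze_zero_norm (fun t => abs_variance_sub_le_of_abs_cdf_sub_le (hmeas _).aemeasurable
      (hmeas t).aemeasurable (hbdd _) (hbdd t) (hcdf t))
      (by simpa using hclose.const_mul (12 * C ^ 2))
  have hwindow : ∀ᶠ t in atTop,
      (∑ k ∈ range m, (Var[ξ (t - k); μ] - Var[ξ t; μ])) / (m : ℝ) ^ 2 =
      Var[fun ω => (∑ i ∈ Icc (t - m + 1) t, ξ i ω) / m; μ] - Var[ξ t; μ] / m := by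
    filter_upwards [eventually_ge_atTop m] with t ht
    rw [variance_sum_div_of_iIndepFun
      (fun i => MemLp.of_bound (hmeas i).aestronglyMeasurable C (hbdd i)) hindep,
      sum_Icc_sub_add_one_eq_sum_range _ ht, sum_sub_distrib, sum_const, card_range, nsmul_eq_mul]
    rcases eq_or_ne (m : ℝ) 0 with hm | hm
    · simp [hm]
    · field_simp
  have hterms (k : ℕ) : Tendsto (fun t => Var[ξ (t - k); μ] - Var[ξ t; μ]) atTop (𝓝 0) :=
    tendsto_sub_sub_of_tendsto_pred_sub (v := fun t => Var[ξ t; μ]) hstep k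
  simpa using ((tendsto_finsetSum (range m) fun k _ => hterms k).div_const ((m : ℝ) ^ 2)).congr'
    hwindow

/-- For independent, uniformly bounded real random variables `ξ t` whose consecutive
distributions become uniformly close (`sup_λ |P(ξ_{t-1} ≤ λ) - P(ξ_t ≤ λ)| → 0`), and a fixed
window size `m ≥ 1`, the variance of the simple moving average statistic
`S_t = (1/m) ∑_{i=t-m+1}^t ξ_i` satisfies `lim_{t→∞} (Var(S_t) - Var(ξ_t)/m) = 0`. -/
theorem sma_variance_tracks
    {Ω : Type*} [MeasurableSpace Ω] (μ : Measure Ω) [IsProbabilityMeasure μ]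
    (ξ : ℕ → Ω → ℝ)
    (hmeas : ∀ t, Measurable (ξ t))
    (C : ℝ) (hC : 0 < C)
    (hbdd : ∀ t, ∀ᵐ ω ∂μ, |ξ t ω| ≤ C)
    (hindep : iIndepFun ξ μ)
    (hclose : Tendsto
      (fun t => ⨆ lam : ℝ, |(μ {ω | ξ (t - 1) ω ≤ lam}).toReal - (μ {ω | ξ t ω ≤ lam}).toReal|)
      atTop (nhds 0))
    (m : ℕ) (hm : 1 ≤ m) :
    Tendsto (fun t =>
        variance (fun ω => (∑ i ∈ Finset.Icc (t - m + 1) t, ξ i ω) / m) μ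
          - variance (ξ t) μ / m)
      atTop (nhds 0) :=
  sma_variance_tracks_general μ ξ hmeas C hbdd hindep hclose m
end

section
/- Let X and Y be real-valued random variables with |X| ≤ C and |Y| ≤ C almost surely, for some constant C > 0. Then |E[X²] − E[Y²]| ≤ 4C² · sup_{λ ∈ ℝ} |P(X ≤ λ) − P(Y ≤ λ)|. -/
/-! Fubini applied to `2 t · 1{X ≤ t}` on `Ω × [a, b]` gives the layer-cake identity
`E[X²] = b² - ∫_a^b 2t P(X ≤ t) dt` whenever `a ≤ X ≤ b`. Subtracting it for `X` and `Y` on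
`[-C, C]` leaves `∫_{-C}^{C} 2t (P(Y ≤ t) - P(X ≤ t)) dt`, whose integrand is at most
`2C · sup |P(X ≤ λ) - P(Y ≤ λ)|` on an interval of length `2C`. -/

open MeasureTheory ProbabilityTheory Set

theorem setIntegral_Icc_indicator_Ici_two_mul {a b x : ℝ} (hax : a ≤ x) (hxb : x ≤ b) :
    ∫ t in Icc a b, (Ici x).indicator (fun t => 2 * t) t = b ^ 2 - x ^ 2 := by
  have hinter : Icc a b ∩ Ici x = Icc x b :=
    Set.ext fun t => ⟨fun h => ⟨h.2, h.1.2⟩, fun h => ⟨⟨hax.trans h.1, h.2⟩, h.1⟩⟩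
  rw [setIntegral_indicator measurableSet_Ici, hinter, integral_Icc_eq_integral_Ioc,
    ← intervalIntegral.integral_of_le hxb, intervalIntegral.integral_const_mul, integral_id]
  ring

section CDF

variable {Ω : Type*} [MeasurableSpace Ω] (μ : Measure Ω) {X : Ω → ℝ}

theorem integral_sq_eq_sub_setIntegral_mul_measureReal_le [IsProbabilityMeasure μ] (hX : Measurable X) {a b : ℝ}
    (hXab : ∀ᵐ ω ∂μ, X ω ∈ Icc a b) :
    ∫ ω, X ω ^ 2 ∂μ = b ^ 2 - ∫ t in Icc a b, 2 * t * μ.real {ω | X ω ≤ t} := by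
  set g : Ω × ℝ → ℝ := {p | X p.1 ≤ p.2}.indicator fun p => 2 * p.2
  have hg : Integrable g (μ.prod (volume.restrict (Icc a b))) :=
    ((continuous_const.mul continuous_id).integrableOn_Icc.comp_snd μ).indicator
      (measurableSet_le (hX.comp measurable_fst) measurable_snd)
  have hX2 : Integrable (fun ω => X ω ^ 2) μ :=
    Integrable.of_bound (hX.pow_const 2).aestronglyMeasurable (max |a| |b| ^ 2)
      (hXab.mono fun ω h => by
        rw [norm_pow, Real.norm_eq_abs]
        exact pow_le_pow_left₀ (abs_nonneg _) (abs_le_max_abs_abs h.1 h.2) 2)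
  have hslices : ∫ ω, (∫ t in Icc a b, g (ω, t)) ∂μ = b ^ 2 - ∫ ω, X ω ^ 2 ∂μ :=
    calc ∫ ω, (∫ t in Icc a b, g (ω, t)) ∂μ = ∫ ω, (b ^ 2 - X ω ^ 2) ∂μ :=
          integral_congr_ae (hXab.mono fun ω h => setIntegral_Icc_indicator_Ici_two_mul h.1 h.2)
      _ = b ^ 2 - ∫ ω, X ω ^ 2 ∂μ := by
          rw [integral_sub (integrable_const _) hX2, integral_const, probReal_univ, one_smul]
  have hfibres : ∀ t, ∫ ω, g (ω, t) ∂μ = 2 * t * μ.real {ω | X ω ≤ t} := fun t => by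
    rw [mul_comm, ← smul_eq_mul,
      ← integral_indicator_const (2 * t) (measurableSet_le hX measurable_const)]
    rfl
  rw [integral_integral_swap (f := fun ω t => g (ω, t)) hg] at hslices
  simp only [hfibres] at hslices
  linarith

theorem integrableOn_Icc_mul_measureReal_le [IsFiniteMeasure μ] (a b : ℝ) :
    IntegrableOn (fun t => 2 * t * μ.real {ω | X ω ≤ t}) (Icc a b) := by
  have hmono : Monotone fun t => μ.real {ω | X ω ≤ t} := fun s t hst =>
    measureReal_mono fun ω hω => le_trans hω hst
  exact (hmono.monotoneOn _).integrableOn_isCompact isCompact_Icc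
    |>.continuousOn_mul (continuous_const.mul continuous_id).continuousOn isCompact_Icc

end CDF

theorem abs_setIntegral_Icc_two_mul_le {C M : ℝ} {f : ℝ → ℝ} (hC : 0 ≤ C)
    (hf : ∀ t ∈ Icc (-C) C, |f t| ≤ M) :
    |∫ t in Icc (-C) C, 2 * t * f t| ≤ 4 * C ^ 2 * M := by
  have hM : 0 ≤ M := (abs_nonneg _).trans (hf 0 ⟨by linarith, hC⟩)
  have hbound : ∀ t ∈ Icc (-C) C, ‖2 * t * f t‖ ≤ 2 * C * M := fun t ht => by
    rw [Real.norm_eq_abs, abs_mul, abs_mul, abs_two]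
    gcongr
    · exact abs_le.2 ht
    · exact hf t ht
  calc |∫ t in Icc (-C) C, 2 * t * f t|
      ≤ 2 * C * M * volume.real (Icc (-C) C) :=
        norm_setIntegral_le_of_norm_le_const measure_Icc_lt_top hbound
    _ = 4 * C ^ 2 * M := by rw [Real.volume_real_Icc_of_le (by linarith)]; ring

theorem abs_integral_sq_sub_le_four_mul_sup_cdf_dist_general
    {Ω₁ Ω₂ : Type*} [MeasurableSpace Ω₁] [MeasurableSpace Ω₂]
    (μ : Measure Ω₁) (ν : Measure Ω₂) [IsProbabilityMeasure μ] [IsProbabilityMeasure ν]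
    (X : Ω₁ → ℝ) (Y : Ω₂ → ℝ) (hX : Measurable X) (hY : Measurable Y)
    (C : ℝ)
    (hXbdd : ∀ᵐ ω ∂μ, |X ω| ≤ C) (hYbdd : ∀ᵐ ω ∂ν, |Y ω| ≤ C) :
    |μ[fun ω => X ω ^ 2] - ν[fun ω => Y ω ^ 2]| ≤
      4 * C ^ 2 * ⨆ lam : ℝ, |(μ {ω | X ω ≤ lam}).toReal - (ν {ω | Y ω ≤ lam}).toReal| := by
  have hC : 0 ≤ C := let ⟨_, hω⟩ := hXbdd.exists; (abs_nonneg _).trans hω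
  have hbdd : BddAbove (range fun lam : ℝ =>
      |(μ {ω | X ω ≤ lam}).toReal - (ν {ω | Y ω ≤ lam}).toReal|) :=
    ⟨1, by
      rintro _ ⟨lam, rfl⟩
      exact abs_sub_le_of_nonneg_of_le measureReal_nonneg measureReal_le_one
        measureReal_nonneg measureReal_le_one⟩
  rw [integral_sq_eq_sub_setIntegral_mul_measureReal_le μ hX (hXbdd.mono fun _ => abs_le.1),
    integral_sq_eq_sub_setIntegral_mul_measureReal_le ν hY (hYbdd.mono fun _ => abs_le.1),
    sub_sub_sub_cancel_left, ← integral_sub (integrableOn_Icc_mul_measureReal_le ν _ _)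
      (integrableOn_Icc_mul_measureReal_le μ _ _)]
  simp_rw [← mul_sub]
  exact abs_setIntegral_Icc_two_mul_le hC fun lam _ =>
    abs_sub_comm (μ.real _) (ν.real _) ▸ le_ciSup hbdd lam

/-- If `X` and `Y` are real random variables (possibly on different probability
spaces) with `|X| ≤ C` and `|Y| ≤ C` almost surely, then
`|E[X²] - E[Y²]| ≤ 4C² · sup_λ |P(X ≤ λ) - P(Y ≤ λ)|`. -/
theorem abs_integral_sq_sub_le_four_mul_sup_cdf_dist
    {Ω₁ Ω₂ : Type*} [MeasurableSpace Ω₁] [MeasurableSpace Ω₂]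
    (μ : Measure Ω₁) (ν : Measure Ω₂) [IsProbabilityMeasure μ] [IsProbabilityMeasure ν]
    (X : Ω₁ → ℝ) (Y : Ω₂ → ℝ) (hX : Measurable X) (hY : Measurable Y)
    (C : ℝ) (hC : 0 < C)
    (hXbdd : ∀ᵐ ω ∂μ, |X ω| ≤ C) (hYbdd : ∀ᵐ ω ∂ν, |Y ω| ≤ C) :
    |μ[fun ω => X ω ^ 2] - ν[fun ω => Y ω ^ 2]| ≤
      4 * C ^ 2 * ⨆ lam : ℝ, |(μ {ω | X ω ≤ lam}).toReal - (ν {ω | Y ω ≤ lam}).toReal| :=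
  abs_integral_sq_sub_le_four_mul_sup_cdf_dist_general μ ν X Y hX hY C hXbdd hYbdd
end

section
/- Let X and Y be real-valued random variables with |X| ≤ C and |Y| ≤ C almost surely, for some constant C > 0. Then the variances satisfy |Var(X) − Var(Y)| ≤ 8C² · sup_{λ ∈ ℝ} |P(X ≤ λ) − P(Y ≤ λ)|. -/
/-!
For `X ∈ [a, b]` almost surely and `h` with derivative `h'` on `[a, b]`, writing
`h x = h b - ∫_a^b 1{x ≤ t} h' t dt` and integrating in `ω` (Fubini) gives
`E h(X) = h b - ∫_a^b h' t · P(X ≤ t) dt`. Hence `|E h(X) - E h(Y)| ≤ (sup |h'|) · (b - a) · D`,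
where `D` is the sup-distance of the distribution functions. On `[-C, C]` this gives
`|EX - EY| ≤ 2CD` (`h = id`) and `|EX² - EY²| ≤ 4C²D` (`h = x²`), and then
`|(EX)² - (EY)²| ≤ |EX - EY| · 2C ≤ 4C²D`.
-/

open MeasureTheory ProbabilityTheory Set

section DistributionFunction

variable {Ω : Type*} [MeasurableSpace Ω] {μ : Measure Ω} {X : Ω → ℝ}

lemma integrable_indicator_Ici_prod [IsFiniteMeasure μ] {ν : Measure ℝ} [SFinite ν]
    {f : ℝ → ℝ} (hX : Measurable X) (hf : Integrable f ν) :
    Integrable (fun p : Ω × ℝ => (Ici (X p.1)).indicator f p.2) (μ.prod ν) :=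
  (hf.comp_snd μ).indicator (measurableSet_le (hX.comp measurable_fst) measurable_snd)

lemma integral_integral_indicator_Ici_eq_integral_mul_cdf [IsFiniteMeasure μ]
    {ν : Measure ℝ} [SFinite ν] {f : ℝ → ℝ} (hX : Measurable X) (hf : Integrable f ν) :
    ∫ ω, ∫ t, (Ici (X ω)).indicator f t ∂ν ∂μ = ∫ t, f t * μ.real {ω | X ω ≤ t} ∂ν := by
  rw [integral_integral_swap (integrable_indicator_Ici_prod hX hf)]
  refine integral_congr_ae (ae_of_all _ fun t => ?_)
  have hmeas : MeasurableSet {ω | X ω ≤ t} := hX measurableSet_Iic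
  dsimp only
  rw [mul_comm, ← smul_eq_mul, ← integral_indicator_const (f t) hmeas]
  rfl

lemma monotone_cdf [IsFiniteMeasure μ] : Monotone fun t => μ.real {ω | X ω ≤ t} :=
  fun _ _ hst => measureReal_mono fun _ hω => le_trans hω hst

lemma integrableOn_mul_cdf [IsProbabilityMeasure μ] {a b : ℝ} {f : ℝ → ℝ}
    (hf : IntegrableOn f (Icc a b)) :
    IntegrableOn (fun t => f t * μ.real {ω | X ω ≤ t}) (Icc a b) := by
  refine hf.mul_bdd monotone_cdf.measurable.aestronglyMeasurable (c := 1)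
    (ae_of_all _ fun t => ?_)
  rw [Real.norm_of_nonneg measureReal_nonneg]
  exact measureReal_le_one

end DistributionFunction

lemma sub_setIntegral_Icc_indicator_Ici_eq {a b x : ℝ} (hx : x ∈ Icc a b) {h h' : ℝ → ℝ}
    (hh : ∀ y ∈ Icc a b, HasDerivAt h (h' y) y) (hh' : IntegrableOn h' (Icc a b)) :
    h b - ∫ t in Icc a b, (Ici x).indicator h' t = h x := by
  have hsub : Icc x b ⊆ Icc a b := Icc_subset_Icc_left hx.1
  have hinter : Icc a b ∩ Ici x = Icc x b := by
    ext y; simp only [mem_inter_iff, mem_Icc, mem_Ici]; constructor <;> grind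
  rw [setIntegral_indicator measurableSet_Ici, hinter,
    integral_Icc_eq_integral_Ioc, ← intervalIntegral.integral_of_le hx.2,
    intervalIntegral.integral_eq_sub_of_hasDerivAt
      (fun y hy => hh y (hsub (uIcc_of_le hx.2 ▸ hy)))
      ((intervalIntegrable_iff_integrableOn_Icc_of_le hx.2).2 (hh'.mono_set hsub))]
  ring

lemma integral_comp_eq_sub_setIntegral_deriv_mul_cdf {Ω : Type*} [MeasurableSpace Ω]
    {μ : Measure Ω} [IsProbabilityMeasure μ] {X : Ω → ℝ} (hX : Measurable X) {a b : ℝ}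
    (hXab : ∀ᵐ ω ∂μ, X ω ∈ Icc a b) {h h' : ℝ → ℝ} (hh : ∀ y ∈ Icc a b, HasDerivAt h (h' y) y)
    (hh' : IntegrableOn h' (Icc a b)) :
    ∫ ω, h (X ω) ∂μ = h b - ∫ t in Icc a b, h' t * μ.real {ω | X ω ≤ t} := by
  have hinner := (integrable_indicator_Ici_prod (μ := μ) hX hh').integral_prod_left
  calc ∫ ω, h (X ω) ∂μ = ∫ ω, (h b - ∫ t in Icc a b, (Ici (X ω)).indicator h' t) ∂μ :=
        integral_congr_ae <| hXab.mono fun ω hω =>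
          (sub_setIntegral_Icc_indicator_Ici_eq hω hh hh').symm
    _ = h b - ∫ t in Icc a b, h' t * μ.real {ω | X ω ≤ t} := by
        rw [integral_sub (integrable_const _) hinner, integral_const, probReal_univ, one_smul,
          integral_integral_indicator_Ici_eq_integral_mul_cdf hX hh']

lemma abs_integral_comp_sub_le_of_abs_cdf_sub_le {Ω₁ Ω₂ : Type*} [MeasurableSpace Ω₁]
    [MeasurableSpace Ω₂] {μ : Measure Ω₁} {ν : Measure Ω₂} [IsProbabilityMeasure μ]
    [IsProbabilityMeasure ν] {X : Ω₁ → ℝ} {Y : Ω₂ → ℝ} (hX : Measurable X) (hY : Measurable Y)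
    {a b : ℝ} (hXab : ∀ᵐ ω ∂μ, X ω ∈ Icc a b) (hYab : ∀ᵐ ω ∂ν, Y ω ∈ Icc a b)
    {h h' : ℝ → ℝ} (hh : ∀ y ∈ Icc a b, HasDerivAt h (h' y) y) (hh' : IntegrableOn h' (Icc a b))
    {M : ℝ} (hM : ∀ t ∈ Icc a b, |h' t| ≤ M) {D : ℝ}
    (hD : ∀ t, |μ.real {ω | X ω ≤ t} - ν.real {ω | Y ω ≤ t}| ≤ D) :
    |∫ ω, h (X ω) ∂μ - ∫ ω, h (Y ω) ∂ν| ≤ M * D * (b - a) := by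
  obtain ⟨ω, hω⟩ := hXab.exists
  rw [integral_comp_eq_sub_setIntegral_deriv_mul_cdf hX hXab hh hh',
    integral_comp_eq_sub_setIntegral_deriv_mul_cdf hY hYab hh hh', sub_sub_sub_cancel_left,
    ← integral_sub (integrableOn_mul_cdf hh') (integrableOn_mul_cdf hh'),
    ← Real.volume_real_Icc_of_le (hω.1.trans hω.2), ← Real.norm_eq_abs]
  refine norm_setIntegral_le_of_norm_le_const measure_Icc_lt_top fun t ht => ?_
  rw [← mul_sub, Real.norm_eq_abs, abs_mul, abs_sub_comm]
  exact mul_le_mul (hM t ht) (hD t) (abs_nonneg _) ((abs_nonneg _).trans (hM t ht))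

lemma abs_cdf_sub_le_iSup {Ω₁ Ω₂ : Type*} [MeasurableSpace Ω₁] [MeasurableSpace Ω₂]
    (μ : Measure Ω₁) (ν : Measure Ω₂) [IsProbabilityMeasure μ] [IsProbabilityMeasure ν]
    (X : Ω₁ → ℝ) (Y : Ω₂ → ℝ) (t : ℝ) :
    |μ.real {ω | X ω ≤ t} - ν.real {ω | Y ω ≤ t}| ≤
      ⨆ s : ℝ, |μ.real {ω | X ω ≤ s} - ν.real {ω | Y ω ≤ s}| := by
  refine le_ciSup (f := fun s => |μ.real {ω | X ω ≤ s} - ν.real {ω | Y ω ≤ s}|) ⟨1, ?_⟩ t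
  rintro _ ⟨s, rfl⟩
  exact abs_sub_le_of_nonneg_of_le measureReal_nonneg measureReal_le_one measureReal_nonneg
    measureReal_le_one

theorem abs_variance_sub_le_eight_mul_sup_cdf_dist_general
    {Ω₁ Ω₂ : Type*} [MeasurableSpace Ω₁] [MeasurableSpace Ω₂]
    (μ : Measure Ω₁) (ν : Measure Ω₂) [IsProbabilityMeasure μ] [IsProbabilityMeasure ν]
    (X : Ω₁ → ℝ) (Y : Ω₂ → ℝ) (hX : Measurable X) (hY : Measurable Y)
    (C : ℝ)
    (hXbdd : ∀ᵐ ω ∂μ, |X ω| ≤ C) (hYbdd : ∀ᵐ ω ∂ν, |Y ω| ≤ C) :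
    |variance X μ - variance Y ν| ≤
      8 * C ^ 2 * ⨆ lam : ℝ, |(μ {ω | X ω ≤ lam}).toReal - (ν {ω | Y ω ≤ lam}).toReal| := by
  set D := ⨆ lam : ℝ, |(μ {ω | X ω ≤ lam}).toReal - (ν {ω | Y ω ≤ lam}).toReal|
  have hD := abs_cdf_sub_le_iSup μ ν X Y
  obtain ⟨_, hω⟩ := hXbdd.exists
  have hCD : 0 ≤ D * (C - -C) :=
    mul_nonneg ((abs_nonneg _).trans (hD 0)) (by linarith [(abs_nonneg _).trans hω])
  have hXC : ∀ᵐ ω ∂μ, X ω ∈ Icc (-C) C := hXbdd.mono fun _ => abs_le.1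
  have hYC : ∀ᵐ ω ∂ν, Y ω ∈ Icc (-C) C := hYbdd.mono fun _ => abs_le.1
  have hmean : |∫ ω, X ω ∂μ - ∫ ω, Y ω ∂ν| ≤ 1 * D * (C - -C) :=
    abs_integral_comp_sub_le_of_abs_cdf_sub_le hX hY hXC hYC (fun y _ => hasDerivAt_id' y)
      continuous_const.integrableOn_Icc (fun _ _ => abs_one.le) hD
  have hsq : |∫ ω, X ω ^ 2 ∂μ - ∫ ω, Y ω ^ 2 ∂ν| ≤ 2 * C * D * (C - -C) :=
    abs_integral_comp_sub_le_of_abs_cdf_sub_le hX hY hXC hYC (h' := fun x => 2 * x)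
      (fun y _ => by simpa using hasDerivAt_pow 2 y) (by fun_prop : Continuous _).integrableOn_Icc
      (fun t ht => by
        rw [abs_mul, abs_two]; exact mul_le_mul_of_nonneg_left (abs_le.2 ht) two_pos.le) hD
  have hsum : |∫ ω, X ω ∂μ + ∫ ω, Y ω ∂ν| ≤ 2 * C := by
    have hXmean := norm_integral_le_of_norm_le_const (f := X) hXbdd
    have hYmean := norm_integral_le_of_norm_le_const (f := Y) hYbdd
    simp only [Real.norm_eq_abs, probReal_univ, mul_one] at hXmean hYmean
    exact (abs_add_le _ _).trans (by linarith)
  rw [variance_eq_sub (MemLp.of_bound hX.aestronglyMeasurable C hXbdd),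
    variance_eq_sub (MemLp.of_bound hY.aestronglyMeasurable C hYbdd)]
  simp only [Pi.pow_apply]
  calc _ = |(∫ ω, X ω ^ 2 ∂μ - ∫ ω, Y ω ^ 2 ∂ν)
          - (∫ ω, X ω ∂μ - ∫ ω, Y ω ∂ν) * (∫ ω, X ω ∂μ + ∫ ω, Y ω ∂ν)| := by ring_nf
    _ ≤ 2 * C * D * (C - -C) + 1 * D * (C - -C) * (2 * C) := by
        grw [abs_sub, abs_mul, hsq, hmean, hsum]
        linarith
    _ = 8 * C ^ 2 * D := by ring

/-- If `X` and `Y` are real random variables (possibly on different probability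
spaces) with `|X| ≤ C` and `|Y| ≤ C` almost surely, then
`|Var(X) - Var(Y)| ≤ 8C² · sup_λ |P(X ≤ λ) - P(Y ≤ λ)|`. -/
theorem abs_variance_sub_le_eight_mul_sup_cdf_dist
    {Ω₁ Ω₂ : Type*} [MeasurableSpace Ω₁] [MeasurableSpace Ω₂]
    (μ : Measure Ω₁) (ν : Measure Ω₂) [IsProbabilityMeasure μ] [IsProbabilityMeasure ν]
    (X : Ω₁ → ℝ) (Y : Ω₂ → ℝ) (hX : Measurable X) (hY : Measurable Y)
    (C : ℝ) (hC : 0 < C)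
    (hXbdd : ∀ᵐ ω ∂μ, |X ω| ≤ C) (hYbdd : ∀ᵐ ω ∂ν, |Y ω| ≤ C) :
    |variance X μ - variance Y ν| ≤
      8 * C ^ 2 * ⨆ lam : ℝ, |(μ {ω | X ω ≤ lam}).toReal - (ν {ω | Y ω ≤ lam}).toReal| :=
  abs_variance_sub_le_eight_mul_sup_cdf_dist_general μ ν X Y hX hY C hXbdd hYbdd
end

section
/- Fix B ≥ 2 and let x ∈ ℝ^B be a point where σ(x) > 0. The normalization map y : ℝ^B → ℝ^B defined by y_a(x) = (x_a − μ(x))/σ(x) is differentiable at x, and its partial derivatives are ∂y_a/∂x_b (x) = (1/σ(x)) · (δ_{ab} − 1/B − y_a(x)·y_b(x)/B), where δ_{ab} is 1 if a = b and 0 otherwise. -/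
open scoped BigOperators

/-- Batch mean `μ(x) = (1/B) ∑_b x_b`. -/
noncomputable def batchMean {B : ℕ} (x : Fin B → ℝ) : ℝ :=
  (∑ b, x b) / B

/-- Batch standard deviation `σ(x) = sqrt((1/B) ∑_b (x_b - μ(x))²)`. -/
noncomputable def batchStd {B : ℕ} (x : Fin B → ℝ) : ℝ :=
  Real.sqrt ((∑ b, (x b - batchMean x) ^ 2) / B)

/-- Batch normalization map `y_a(x) = (x_a - μ(x)) / σ(x)`. -/
noncomputable def batchNorm {B : ℕ} (x : Fin B → ℝ) : Fin B → ℝ :=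
  fun a => (x a - batchMean x) / batchStd x

/-!
The mean is a linear functional. Because the deviations `x c - μ(x)` sum to zero, the
differential of the variance `σ² = (1/B) ∑ (x c - μ(x))²` is `(2/B) ∑ (x c - μ(x)) dx_c`, so
`dσ = (1/B) ∑ y_c dx_c`, and the quotient rule gives `dy_a = σ⁻¹ (dx_a - dμ - y_a dσ)`.
-/

open ContinuousLinearMap

section

variable {B : ℕ}

noncomputable def batchMeanCLM (B : ℕ) : (Fin B → ℝ) →L[ℝ] ℝ :=
  (B : ℝ)⁻¹ • ∑ c, proj c

theorem batchMeanCLM_apply (x : Fin B → ℝ) : batchMeanCLM B x = batchMean x := by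
  simp [batchMeanCLM, batchMean, div_eq_inv_mul]

theorem batchMeanCLM_single (b : Fin B) : batchMeanCLM B (Pi.single b 1) = (B : ℝ)⁻¹ := by
  simp [batchMeanCLM_apply, batchMean]

theorem hasFDerivAt_batchMean (x : Fin B → ℝ) :
    HasFDerivAt (batchMean (B := B)) (batchMeanCLM B) x := by
  have h : ⇑(batchMeanCLM B) = batchMean := funext batchMeanCLM_apply
  exact h ▸ (batchMeanCLM B).hasFDerivAt

theorem sum_sub_batchMean (x : Fin B → ℝ) : ∑ c, (x c - batchMean x) = 0 := by
  rcases Nat.eq_zero_or_pos B with rfl | hB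
  · simp
  · rw [Finset.sum_sub_distrib, Finset.sum_const, Finset.card_univ, Fintype.card_fin,
      nsmul_eq_mul, batchMean, mul_div_cancel₀ _ (by positivity), sub_self]

noncomputable def batchVar (x : Fin B → ℝ) : ℝ :=
  (∑ b, (x b - batchMean x) ^ 2) / B

theorem hasFDerivAt_batchVar (x : Fin B → ℝ) :
    HasFDerivAt (batchVar (B := B))
      ((2 / B : ℝ) • ∑ c, (x c - batchMean x) • proj c : (Fin B → ℝ) →L[ℝ] ℝ) x := by
  have hdev (c : Fin B) : HasFDerivAt (fun y : Fin B → ℝ => y c - batchMean y)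
      (proj c - batchMeanCLM B) x :=
    (hasFDerivAt_apply c x).sub (hasFDerivAt_batchMean x)
  have hsum :=
    (HasFDerivAt.fun_sum (u := Finset.univ) fun c _ => (hdev c).pow 2).mul_const (B : ℝ)⁻¹
  simp only [← div_eq_mul_inv] at hsum
  refine hsum.congr_fderiv ?_
  ext v
  simp only [smul_apply, sum_apply, sub_apply, proj_apply, smul_eq_mul, batchMeanCLM_apply]
  have hcancel : ∑ c, (x c - batchMean x) * batchMean v = 0 := by
    rw [← Finset.sum_mul, sum_sub_batchMean, zero_mul]
  have hterm (c : Fin B) : 2 • (x c - batchMean x) ^ (2 - 1) * (v c - batchMean v) =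
      2 * ((x c - batchMean x) * v c) - 2 * ((x c - batchMean x) * batchMean v) := by
    rw [nsmul_eq_mul]
    ring
  rw [Finset.sum_congr rfl fun c _ => hterm c, Finset.sum_sub_distrib, ← Finset.mul_sum,
    ← Finset.mul_sum, hcancel]
  ring

theorem hasFDerivAt_batchStd {x : Fin B → ℝ} (hσ : batchStd x ≠ 0) :
    HasFDerivAt (batchStd (B := B))
      ((B : ℝ)⁻¹ • ∑ c, batchNorm x c • proj c : (Fin B → ℝ) →L[ℝ] ℝ) x := by
  have hvar : batchVar x ≠ 0 := fun h => hσ (by rw [batchStd, ← batchVar, h, Real.sqrt_zero])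
  refine ((hasFDerivAt_batchVar x).sqrt hvar).congr_fderiv ?_
  ext v
  have hstd : √(batchVar x) = batchStd x := rfl
  simp only [smul_apply, sum_apply, proj_apply, smul_eq_mul, batchNorm, Finset.mul_sum, hstd]
  refine Finset.sum_congr rfl fun c _ => ?_
  field_simp

theorem hasFDerivAt_batchNorm_apply {x : Fin B → ℝ} (hσ : batchStd x ≠ 0) (a : Fin B) :
    HasFDerivAt (fun y => batchNorm y a)
      ((batchStd x)⁻¹ •
        (proj a - batchMeanCLM B - (batchNorm x a / B) • ∑ c, batchNorm x c • proj c)) x := by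
  have hinv := (hasDerivAt_inv hσ).comp_hasFDerivAt x (hasFDerivAt_batchStd hσ)
  refine (((hasFDerivAt_apply a x).sub (hasFDerivAt_batchMean x)).mul hinv).congr_fderiv ?_
  ext v
  simp only [add_apply, smul_apply, sub_apply, Function.comp_apply, Pi.sub_apply, smul_eq_mul,
    batchNorm]
  field_simp
  ring

end

theorem batchNorm_differentiableAt_and_fderiv_general
    {B : ℕ} (x : Fin B → ℝ) (hσ : 0 < batchStd x) :
    DifferentiableAt ℝ (batchNorm (B := B)) x ∧
    ∀ a b : Fin B,
      fderiv ℝ (batchNorm (B := B)) x (Pi.single b 1) a =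
        (1 / batchStd x) *
          ((if a = b then (1 : ℝ) else 0) - 1 / B - batchNorm x a * batchNorm x b / B) := by
  have hF := hasFDerivAt_pi.2 fun a => hasFDerivAt_batchNorm_apply hσ.ne' a
  refine ⟨hF.differentiableAt, fun a b => ?_⟩
  rw [hF.fderiv]
  simp only [pi_apply, smul_apply, sub_apply, proj_apply, sum_apply, batchMeanCLM_single,
    smul_eq_mul, Pi.single_apply, mul_ite, mul_one, mul_zero, Finset.sum_ite_eq',
    Finset.mem_univ, if_true]
  ring

/-- For `B ≥ 2` and `x ∈ ℝ^B` with `σ(x) > 0`, the batch normalization map is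
differentiable at `x`, with partial derivatives
`∂y_a/∂x_b = (1/σ(x)) (δ_{ab} - 1/B - y_a(x) y_b(x)/B)`. -/
theorem batchNorm_differentiableAt_and_fderiv
    {B : ℕ} (hB : 2 ≤ B) (x : Fin B → ℝ) (hσ : 0 < batchStd x) :
    DifferentiableAt ℝ (batchNorm (B := B)) x ∧
    ∀ a b : Fin B,
      fderiv ℝ (batchNorm (B := B)) x (Pi.single b 1) a =
        (1 / batchStd x) *
          ((if a = b then (1 : ℝ) else 0) - 1 / B - batchNorm x a * batchNorm x b / B) :=
  batchNorm_differentiableAt_and_fderiv_general x hσ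
end

section
/- Fix B ≥ 1, let x ∈ ℝ^B be a point where χ(x) > 0, and let L : ℝ^B → ℝ be differentiable at y(x). Then L ∘ y is differentiable at x and its partial derivatives satisfy the modified-normalization backward formula: ∂(L∘y)/∂x_b (x) = (1/χ(x)) · (∂L/∂y_b (y(x)) − y_b(x)·Ψ), where Ψ = (1/B) Σ_{a=1}^B y_a(x) · ∂L/∂y_a (y(x)). -/
open scoped BigOperators

/-- Batch root-mean-square `χ(x) = sqrt((1/B) ∑_b x_b²)`. -/
noncomputable def batchRms {B : ℕ} (x : Fin B → ℝ) : ℝ :=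
  Real.sqrt ((∑ b, x b ^ 2) / B)

/-- Modified normalization map `y_a(x) = x_a / χ(x)`. -/
noncomputable def modNorm {B : ℕ} (x : Fin B → ℝ) : Fin B → ℝ :=
  fun a => x a / batchRms x

/-!
Since `y = χ⁻¹ • x` and `dχ(v) = (1 / (B χ)) ∑_b x_b v_b`, the Jacobian of `y` at `x` is
`χ⁻¹ (I - (1/B) y yᵀ)`. The chain rule then gives
`∂(L∘y)/∂x_b = χ⁻¹ (∂_b L - (y_b / B) L'(y))`, and `L'(y) = ∑_a y_a ∂_a L` is `B Ψ`.
-/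

open ContinuousLinearMap

theorem ContinuousLinearMap.apply_eq_sum_mul_apply_single {ι R : Type*} [Fintype ι] [DecidableEq ι]
    [Semiring R] [TopologicalSpace R] (f : (ι → R) →L[R] R) (v : ι → R) :
    f v = ∑ i, v i * f (Pi.single i 1) := by
  conv_lhs => rw [← Finset.univ_sum_single v, map_sum]
  refine Finset.sum_congr rfl fun i _ => ?_
  rw [← smul_eq_mul, ← map_smul, ← Pi.single_smul', smul_eq_mul, mul_one]

theorem hasFDerivAt_sum_sq {ι : Type*} [Fintype ι] (x : ι → ℝ) :
    HasFDerivAt (fun z : ι → ℝ => ∑ i, z i ^ 2)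
      (∑ i, (2 * x i) • proj (R := ℝ) (φ := fun _ : ι => ℝ) i) x := by
  refine HasFDerivAt.fun_sum fun i _ => ?_
  refine ((hasFDerivAt_apply i x).pow 2).congr_fderiv ?_
  simp

variable {B : ℕ} {x : Fin B → ℝ}

theorem modNorm_eq_inv_batchRms_smul : modNorm (B := B) = fun z => (batchRms z)⁻¹ • z := by
  funext z a
  simp [modNorm, div_eq_inv_mul]

theorem hasFDerivAt_batchRms (hχ : 0 < batchRms x) :
    HasFDerivAt batchRms
      ((B * batchRms x)⁻¹ • ∑ b, x b • proj (R := ℝ) (φ := fun _ : Fin B => ℝ) b) x := by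
  have hmean : HasFDerivAt (fun z : Fin B → ℝ => (∑ b, z b ^ 2) / B)
      ((B : ℝ)⁻¹ • ∑ b, (2 * x b) • proj (R := ℝ) (φ := fun _ : Fin B => ℝ) b) x := by
    simpa only [div_eq_inv_mul] using (hasFDerivAt_sum_sq x).const_mul ((B : ℝ)⁻¹)
  refine (hmean.sqrt (Real.sqrt_pos.mp hχ).ne').congr_fderiv ?_
  have hsqrt : √((∑ b, x b ^ 2) / B) = batchRms x := rfl
  simp only [hsqrt, Finset.smul_sum, smul_smul]
  congr! 2 with b
  field_simp

theorem hasFDerivAt_modNorm (hχ : 0 < batchRms x) :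
    HasFDerivAt modNorm ((batchRms x)⁻¹ • (ContinuousLinearMap.id ℝ (Fin B → ℝ) -
      ((B : ℝ)⁻¹ • ∑ a, modNorm x a • proj (R := ℝ) (φ := fun _ : Fin B => ℝ) a).smulRight
        (modNorm x))) x := by
  rw [modNorm_eq_inv_batchRms_smul]
  refine (((hasDerivAt_inv hχ.ne').comp_hasFDerivAt x (hasFDerivAt_batchRms hχ)).smul
    (hasFDerivAt_id x)).congr_fderiv ?_
  ext v b
  simp only [Function.comp_apply, mul_inv_rev, neg_smul, id_eq, add_apply, smul_apply, id_apply,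
    smulRight_apply, neg_apply, sum_apply, proj_apply, smul_eq_mul, mul_assoc, Pi.add_apply,
    Pi.smul_apply, Pi.neg_apply, sub_apply, ← Finset.mul_sum, Pi.sub_apply]
  ring

theorem modNorm_backward_general
    {B : ℕ} (x : Fin B → ℝ) (hχ : 0 < batchRms x)
    (L : (Fin B → ℝ) → ℝ) (hL : DifferentiableAt ℝ L (modNorm x)) :
    DifferentiableAt ℝ (L ∘ modNorm (B := B)) x ∧
    ∀ b : Fin B,
      fderiv ℝ (L ∘ modNorm (B := B)) x (Pi.single b 1) =
        (1 / batchRms x) *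
          (fderiv ℝ L (modNorm x) (Pi.single b 1)
            - modNorm x b *
                ((∑ a, modNorm x a * fderiv ℝ L (modNorm x) (Pi.single a 1)) / B)) := by
  have hcomp := hL.hasFDerivAt.comp x (hasFDerivAt_modNorm hχ)
  refine ⟨hcomp.differentiableAt, fun b => ?_⟩
  rw [hcomp.fderiv, ← apply_eq_sum_mul_apply_single]
  simp only [comp_apply, smul_apply, sub_apply, id_apply, smulRight_apply, sum_apply, proj_apply,
    Pi.single_apply, smul_eq_mul, mul_ite, mul_one, mul_zero, Finset.sum_ite_eq', Finset.mem_univ,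
    if_true, map_smul, map_sub]
  ring

/-- For `B ≥ 1`, `x ∈ ℝ^B` with `χ(x) > 0`, and `L : ℝ^B → ℝ` differentiable at
`y(x)`, the composite `L ∘ y` is differentiable at `x` and satisfies the modified-normalization
backward formula `∂(L∘y)/∂x_b = (1/χ(x)) (∂L/∂y_b - y_b(x) Ψ)`, where
`Ψ = (1/B) ∑_a y_a(x) ∂L/∂y_a`. -/
theorem modNorm_backward
    {B : ℕ} (hB : 1 ≤ B) (x : Fin B → ℝ) (hχ : 0 < batchRms x)
    (L : (Fin B → ℝ) → ℝ) (hL : DifferentiableAt ℝ L (modNorm x)) :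
    DifferentiableAt ℝ (L ∘ modNorm (B := B)) x ∧
    ∀ b : Fin B,
      fderiv ℝ (L ∘ modNorm (B := B)) x (Pi.single b 1) =
        (1 / batchRms x) *
          (fderiv ℝ L (modNorm x) (Pi.single b 1)
            - modNorm x b *
                ((∑ a, modNorm x a * fderiv ℝ L (modNorm x) (Pi.single a 1)) / B)) :=
  modNorm_backward_general x hχ L hL
end
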